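/- arXiv:0908.2228 — 2 statements merged into one kernel-verified Lean document; each statement's English description precedes it below -/
import Mathlib

section
/- For any tower (X_n)_{n∈ω} of uniform spaces, the uniformity of the uniform direct limit u-lim X_n is generated by the family of pseudometrics { lim d_n : (d_n)_{n∈ω} a monotone sequence with d_n a uniform pseudometric on X_n }; that is, the sets { (x,y) : lim d_n(x,y) < ε } for ε > 0 and monotone sequences (d_n) form a base of the uniformity of u-lim X_n. -/
open Set Filter Topology

universe u

/-- A tower of uniform spaces on the ambient set `X`: an increasing sequence
`S 0 ⊆ S 1 ⊆ ⋯` of subsets covering `X`, each `S n` carrying a uniformity which is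
the subspace uniformity inherited from `S (n+1)`. -/
structure UniformTower (X : Type u) where
  S : ℕ → Set X
  mono : Monotone S
  iUnion_eq : ⋃ n, S n = Set.univ
  u : (n : ℕ) → UniformSpace (S n)
  compat : ∀ n, u n = UniformSpace.comap (Set.inclusion (mono (Nat.le_succ n))) (u (n + 1))

namespace UniformTower

variable {X : Type u} (T : UniformTower X)

/-- The uniform direct limit: the strongest (finest) uniformity on `X` making all
the identity inclusions `S n → X` uniformly continuous. -/
noncomputable def dirLim : UniformSpace X :=
  sInf {u' : UniformSpace X |
    ∀ n, @UniformContinuous _ _ (T.u n) u' (Subtype.val : T.S n → X)}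

/-- The height `|x| = min {n : x ∈ S n}` of a point of `X`. -/
noncomputable def height (x : X) : ℕ := sInf {n | x ∈ T.S n}

lemma mem_S_height (x : X) : x ∈ T.S (T.height x) := by
  have hx : x ∈ ⋃ n, T.S n := T.iUnion_eq ▸ Set.mem_univ x
  rcases Set.mem_iUnion.mp hx with ⟨n, hn⟩
  exact Nat.sInf_mem ⟨n, show n ∈ {m | x ∈ T.S m} from hn⟩

/-- Given a sequence of pseudometrics `d n` on the stages `S n`, the distance
`d_{|x,y|}(x,y)` where `|x,y| = max (|x|, |y|)`. -/
noncomputable def chainD (d : (n : ℕ) → T.S n → T.S n → ℝ) (x y : X) : ℝ :=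
  d (max (T.height x) (T.height y))
    ⟨x, T.mono (le_max_left _ _) (T.mem_S_height x)⟩
    ⟨y, T.mono (le_max_right _ _) (T.mem_S_height y)⟩

/-- The limit pseudometric `lim d_n` of a sequence of pseudometrics:
`lim d_n (x,y) = inf { Σ_{i=1}^m d_{|x_{i-1},x_i|}(x_{i-1},x_i) : x = x_0, x_1, …, x_m = y }`. -/
noncomputable def limD (d : (n : ℕ) → T.S n → T.S n → ℝ) (x y : X) : ℝ :=
  sInf {r : ℝ | ∃ (m : ℕ) (c : ℕ → X), c 0 = x ∧ c m = y ∧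
    r = ∑ i ∈ Finset.range m, T.chainD d (c i) (c (i + 1))}

/-- A sequence of pseudometrics on the stages of the tower is monotone if
`d n ≤ d (n+1)` on `S n × S n`. -/
def MonotoneSeq (d : (n : ℕ) → T.S n → T.S n → ℝ) : Prop :=
  ∀ n (x y : T.S n),
    d n x y ≤ d (n + 1) (Set.inclusion (T.mono (Nat.le_succ n)) x)
      (Set.inclusion (T.mono (Nat.le_succ n)) y)

end UniformTower

/-- `d` is a pseudometric: it vanishes on the diagonal, is symmetric and satisfies
the triangle inequality. -/
def IsPseudometric {α : Type*} (d : α → α → ℝ) : Prop :=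
  (∀ x, d x x = 0) ∧ (∀ x y, d x y = d y x) ∧ (∀ x y z, d x z ≤ d x y + d y z)

/-- `d` is a uniform pseudometric on the uniform space `(α, u)`:
for every `ε > 0` the set `{d < ε}` is an entourage. -/
def IsUniformPseudometric {α : Type*} (u : UniformSpace α) (d : α → α → ℝ) : Prop :=
  IsPseudometric d ∧ ∀ ε : ℝ, 0 < ε → {p : α × α | d p.1 p.2 < ε} ∈ @uniformity α u


/-! If `(d_n)` is a monotone sequence of uniform pseudometrics, then `lim d_n` is a
pseudometric bounded by `d_n` on `X_n`, so the uniformity it defines makes every inclusion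
`X_n → X` uniformly continuous and is therefore coarser than the direct-limit uniformity.
Conversely, any entourage `U` of the direct limit lies in a coarser countably generated
uniformity, which is pseudometrizable by some `ρ`; the restrictions `d_n = ρ|X_n` form a
constant, hence monotone, sequence, and `lim d_n ≥ ρ` by the triangle inequality for `ρ`,
so a small `lim d_n`-ball lies in a small `ρ`-ball, hence in `U`. -/

open scoped Uniformity Pointwise

section ChainDist

variable {α : Type*} (ρ : α → α → ℝ)

def chainSums (x y : α) : Set ℝ :=
  {r | ∃ (m : ℕ) (c : ℕ → α), c 0 = x ∧ c m = y ∧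
    r = ∑ i ∈ Finset.range m, ρ (c i) (c (i + 1))}

noncomputable def chainDist (x y : α) : ℝ := sInf (chainSums ρ x y)

variable {ρ}

lemma single_mem_chainSums (x y : α) : ρ x y ∈ chainSums ρ x y :=
  ⟨1, fun i => if i = 0 then x else y, by simp, by simp, by simp⟩

lemma chainSums_add_subset (x y z : α) :
    chainSums ρ x y + chainSums ρ y z ⊆ chainSums ρ x z := by
  rintro _ ⟨_, ⟨m, c, rfl, rfl, rfl⟩, _, ⟨k, c', hc', rfl, rfl⟩, rfl⟩
  refine ⟨m + k, fun i => if i ≤ m then c i else c' (i - m), by simp, ?_, ?_⟩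
  · rcases k.eq_zero_or_pos with rfl | hk
    · simp [hc']
    · simp [hk.ne']
  · rw [Finset.sum_range_add]
    congr 1
    · refine Finset.sum_congr rfl fun i hi => ?_
      have hi : i < m := Finset.mem_range.mp hi
      simp [hi.le, Nat.succ_le_of_lt hi]
    · refine Finset.sum_congr rfl fun i _ => ?_
      rcases i.eq_zero_or_pos with rfl | hi
      · simp [hc']
      · simp [hi.ne', add_assoc]

lemma chainSums_subset_swap (hsymm : ∀ x y, ρ x y = ρ y x) (x y : α) :
    chainSums ρ x y ⊆ chainSums ρ y x := by
  rintro _ ⟨m, c, rfl, rfl, rfl⟩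
  refine ⟨m, fun i => c (m - i), by simp, by simp, ?_⟩
  rw [← Finset.sum_range_reflect]
  refine Finset.sum_congr rfl fun j hj => ?_
  have hj : j < m := Finset.mem_range.mp hj
  dsimp only
  rw [hsymm]
  congr 2 <;> omega

lemma nonneg_of_mem_chainSums (hnonneg : ∀ x y, 0 ≤ ρ x y) {x y : α} {r : ℝ}
    (hr : r ∈ chainSums ρ x y) : 0 ≤ r := by
  obtain ⟨m, c, -, -, rfl⟩ := hr
  exact Finset.sum_nonneg fun i _ => hnonneg _ _

lemma chainSums_bddBelow (hnonneg : ∀ x y, 0 ≤ ρ x y) (x y : α) :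
    BddBelow (chainSums ρ x y) :=
  ⟨0, fun _ => nonneg_of_mem_chainSums hnonneg⟩

lemma chainDist_le (hnonneg : ∀ x y, 0 ≤ ρ x y) (x y : α) : chainDist ρ x y ≤ ρ x y :=
  csInf_le (chainSums_bddBelow hnonneg x y) (single_mem_chainSums x y)

lemma chainDist_self (hnonneg : ∀ x y, 0 ≤ ρ x y) (x : α) : chainDist ρ x x = 0 :=
  le_antisymm (csInf_le (chainSums_bddBelow hnonneg x x) ⟨0, fun _ => x, rfl, rfl, by simp⟩)
    (Real.sInf_nonneg fun _ => nonneg_of_mem_chainSums hnonneg)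

lemma chainDist_triangle (hnonneg : ∀ x y, 0 ≤ ρ x y) (x y z : α) :
    chainDist ρ x z ≤ chainDist ρ x y + chainDist ρ y z := by
  have hxy : (chainSums ρ x y).Nonempty := ⟨_, single_mem_chainSums x y⟩
  have hyz : (chainSums ρ y z).Nonempty := ⟨_, single_mem_chainSums y z⟩
  rw [chainDist, chainDist, chainDist, ← csInf_add hxy (chainSums_bddBelow hnonneg x y) hyz
    (chainSums_bddBelow hnonneg y z)]
  exact csInf_le_csInf (chainSums_bddBelow hnonneg x z) (hxy.add hyz) (chainSums_add_subset x y z)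

lemma chainDist_comm (hsymm : ∀ x y, ρ x y = ρ y x) (x y : α) :
    chainDist ρ x y = chainDist ρ y x :=
  congrArg sInf ((chainSums_subset_swap hsymm x y).antisymm (chainSums_subset_swap hsymm y x))

lemma dist_le_chainDist [PseudoMetricSpace α] (h : ∀ x y, dist x y ≤ ρ x y) (x y : α) :
    dist x y ≤ chainDist ρ x y :=
  le_csInf ⟨_, single_mem_chainSums x y⟩ <| by
    rintro _ ⟨m, c, rfl, rfl, rfl⟩
    exact (dist_le_range_sum_dist c m).trans (Finset.sum_le_sum fun i _ => h _ _)

end ChainDist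

section Pseudometrizable

open scoped SetRel

variable {α : Type*} [UniformSpace α]

lemma exists_seq_symm_comp_subset {U : SetRel α α} (hU : U ∈ 𝓤 α) :
    ∃ V : ℕ → SetRel α α, (∀ n, V n ∈ 𝓤 α) ∧ (∀ n, (V n).IsSymm) ∧
      (∀ n, V (n + 1) ○ V (n + 1) ⊆ V n) ∧ V 0 ⊆ U := by
  choose! f hf_mem hf_symm hf_comp using
    fun W (hW : W ∈ 𝓤 α) => comp_symm_mem_uniformity_sets hW
  have hstep : ∀ n, f^[n + 1 + 1] U = f (f^[n + 1] U) := fun n =>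
    Function.iterate_succ_apply' f _ U
  have hmem : ∀ n, f^[n + 1] U ∈ 𝓤 α := by
    intro n
    induction n with
    | zero => exact hf_mem U hU
    | succ n ih => rw [hstep]; exact hf_mem _ ih
  refine ⟨fun n => f^[n + 1] U, hmem, fun n => ?_, fun n => ?_, ?_⟩
  · cases n with
    | zero => exact hf_symm U hU
    | succ n => dsimp only; rw [hstep]; exact hf_symm _ (hmem n)
  · dsimp only
    rw [hstep]
    exact hf_comp _ (hmem n)
  · exact (subset_comp_self_of_mem_uniformity (hf_mem U hU)).trans (hf_comp U hU)

theorem exists_pseudoMetricSpace_le_of_mem_uniformity {U : SetRel α α} (hU : U ∈ 𝓤 α) :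
    ∃ I : PseudoMetricSpace α, ‹UniformSpace α› ≤ I.toUniformSpace ∧
      U ∈ 𝓤[I.toUniformSpace] := by
  obtain ⟨V, hV_mem, hV_symm, hV_comp, hV_sub⟩ := exists_seq_symm_comp_subset hU
  have hV_anti : Antitone V := antitone_nat_of_succ_le fun n =>
    (subset_comp_self_of_mem_uniformity (hV_mem (n + 1))).trans (hV_comp n)
  have hbasis : (⨅ n, 𝓟 (V n)).HasBasis (fun _ => True) V :=
    Filter.hasBasis_iInf_principal hV_anti.directed_ge
  let u : UniformSpace α := .ofCore <| .mk' (⨅ n, 𝓟 (V n))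
    (fun r hr x => by
      obtain ⟨n, -, hn⟩ := hbasis.mem_iff.mp hr
      exact hn (refl_mem_uniformity (hV_mem n)))
    (fun r hr => by
      obtain ⟨n, -, hn⟩ := hbasis.mem_iff.mp hr
      exact hbasis.mem_iff.mpr ⟨n, trivial, fun p hp => hn ((hV_symm n).symm _ _ hp)⟩)
    (fun r hr => by
      obtain ⟨n, -, hn⟩ := hbasis.mem_iff.mp hr
      exact ⟨V (n + 1), hbasis.mem_of_mem trivial, (hV_comp n).trans hn⟩)
  have : IsCountablyGenerated 𝓤[u] := hbasis.isCountablyGenerated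
  obtain ⟨I, hI⟩ := @UniformSpace.metrizable_uniformity α u this
  refine ⟨I, hI ▸ le_iInf fun n => le_principal_iff.mpr (hV_mem n), ?_⟩
  rw [hI]
  exact mem_of_superset (hbasis.mem_of_mem (i := 0) trivial) hV_sub

end Pseudometrizable

lemma IsPseudometric.nonneg {α : Type*} {d : α → α → ℝ} (hd : IsPseudometric d)
    (x y : α) : 0 ≤ d x y := by
  linarith [hd.1 x, hd.2.1 x y, hd.2.2 x y x]

lemma isUniformPseudometric_dist_comp {α β : Type*} [PseudoMetricSpace α] {u : UniformSpace β}
    {f : β → α} (hf : UniformContinuous[u, PseudoMetricSpace.toUniformSpace] f) :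
    IsUniformPseudometric u (fun a b => dist (f a) (f b)) :=
  ⟨⟨fun _ => dist_self _, fun _ _ => dist_comm _ _, fun _ _ _ => dist_triangle _ _ _⟩,
    fun _ hε => hf (Metric.dist_mem_uniformity hε)⟩

namespace UniformTower

variable {X : Type u}

lemma MonotoneSeq.le_of_le {T : UniformTower X} {d : (n : ℕ) → T.S n → T.S n → ℝ}
    (hmono : T.MonotoneSeq d) {k n : ℕ} (h : k ≤ n)
    (x y : T.S k) : d k x y ≤ d n (inclusion (T.mono h) x) (inclusion (T.mono h) y) := by
  induction n, h using Nat.le_induction with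
  | base => rfl
  | succ n hkn ih => exact ih.trans (hmono n _ _)

variable (T : UniformTower X) {d : (n : ℕ) → T.S n → T.S n → ℝ}

lemma uniformContinuous_val_dirLim (n : ℕ) :
    UniformContinuous[T.u n, T.dirLim] (Subtype.val : T.S n → X) :=
  uniformContinuous_sInf_rng.mpr fun _ hu => hu n

lemma dirLim_le {u' : UniformSpace X}
    (h : ∀ n, UniformContinuous[T.u n, u'] (Subtype.val : T.S n → X)) : T.dirLim ≤ u' :=
  sInf_le h

lemma limD_eq_chainDist (d : (n : ℕ) → T.S n → T.S n → ℝ) :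
    T.limD d = chainDist (T.chainD d) := rfl

lemma chainD_nonneg (hd : ∀ n, IsPseudometric (d n)) (x y : X) : 0 ≤ T.chainD d x y :=
  (hd _).nonneg _ _

lemma chainD_comm (hd : ∀ n, IsPseudometric (d n)) (x y : X) :
    T.chainD d x y = T.chainD d y x := by
  unfold chainD
  rw [(hd _).2.1]
  congr 1
  all_goals first
    | exact max_comm _ _
    | exact (Subtype.heq_iff_coe_eq fun _ => by rw [max_comm]).mpr rfl

lemma chainD_le (hmono : T.MonotoneSeq d) {n : ℕ} (x y : T.S n) :
    T.chainD d x y ≤ d n x y :=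
  hmono.le_of_le (max_le (Nat.sInf_le x.2) (Nat.sInf_le y.2)) _ _

lemma limD_le (hd : ∀ n, IsPseudometric (d n)) (hmono : T.MonotoneSeq d) {n : ℕ}
    (x y : T.S n) : T.limD d x y ≤ d n x y :=
  (chainDist_le (T.chainD_nonneg hd) x y).trans (T.chainD_le hmono x y)

lemma limD_lt_mem_uniformity_dirLim (hd : ∀ n, IsUniformPseudometric (T.u n) (d n))
    (hmono : T.MonotoneSeq d) {ε : ℝ} (hε : 0 < ε) :
    {q : X × X | T.limD d q.1 q.2 < ε} ∈ 𝓤[T.dirLim] := by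
  have hnonneg := T.chainD_nonneg fun n => (hd n).1
  have hbasis := UniformSpace.hasBasis_ofFun ⟨1, one_pos⟩ (chainDist (T.chainD d))
    (chainDist_self hnonneg) (chainDist_comm (T.chainD_comm fun n => (hd n).1))
    (chainDist_triangle hnonneg) fun δ hδ =>
      ⟨δ / 2, half_pos hδ, fun a ha b hb => by linarith⟩
  rw [limD_eq_chainDist]
  refine T.dirLim_le (fun n => ?_) (hbasis.mem_of_mem hε)
  refine hbasis.tendsto_right_iff.mpr fun δ hδ => mem_of_superset ((hd n).2 δ hδ) ?_
  exact fun q hq => (T.limD_le (fun n => (hd n).1) hmono q.1 q.2).trans_lt hq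

lemma exists_limD_lt_subset {U : SetRel X X} (hU : U ∈ 𝓤[T.dirLim]) :
    ∃ d : (n : ℕ) → T.S n → T.S n → ℝ, (∀ n, IsUniformPseudometric (T.u n) (d n)) ∧
      T.MonotoneSeq d ∧ ∃ ε > 0, {q : X × X | T.limD d q.1 q.2 < ε} ⊆ U := by
  obtain ⟨I, hle, hUI⟩ := @exists_pseudoMetricSpace_le_of_mem_uniformity X T.dirLim U hU
  let := I
  obtain ⟨ε, hε, hεU⟩ := Metric.mem_uniformity_dist.mp hUI
  refine ⟨fun n a b => dist a.1 b.1, fun n => isUniformPseudometric_dist_comp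
    ((T.uniformContinuous_val_dirLim n).mono_right hle), fun n x y => le_rfl, ε, hε,
    fun q hq => hεU ((dist_le_chainDist (fun _ _ => le_rfl) q.1 q.2).trans_lt hq)⟩

end UniformTower

/-- The uniformity of the uniform direct limit `u-lim X_n` of a tower of uniform spaces
is generated by the limit pseudometrics `lim d_n` of monotone sequences `(d_n)` of uniform
pseudometrics: the sets `{(x,y) : lim d_n (x,y) < ε}`, for `ε > 0` and `(d_n)` a monotone
sequence of uniform pseudometrics, form a base of the uniformity of `u-lim X_n`. -/
theorem statement3 {X : Type u} (T : UniformTower X) :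
    (@uniformity X T.dirLim).HasBasis
      (fun p : ((n : ℕ) → T.S n → T.S n → ℝ) × ℝ =>
        (∀ n, IsUniformPseudometric (T.u n) (p.1 n)) ∧ T.MonotoneSeq p.1 ∧ 0 < p.2)
      (fun p => {q : X × X | T.limD p.1 q.1 q.2 < p.2}) := by
  refine ⟨fun U => ⟨fun hU => ?_, ?_⟩⟩
  · obtain ⟨d, hd, hmono, ε, hε, hsub⟩ := T.exists_limD_lt_subset hU
    exact ⟨(d, ε), ⟨hd, hmono, hε⟩, hsub⟩
  · rintro ⟨⟨d, ε⟩, ⟨hd, hmono, hε⟩, hsub⟩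
    exact mem_of_superset (T.limD_lt_mem_uniformity_dirLim hd hmono hε) hsub
end

section
/- Let (X_n)_{n∈ω} be an increasing sequence of sets with union X, and let (d_n)_{n∈ω} be a monotone sequence of pseudometrics (d_n a pseudometric on X_n). For any points x, y ∈ X and any ε > 0 there is a chain of points x = x_0, x_1, …, x_m = y in X such that Σ_{i=1}^{m} d_{|x_{i-1},x_i|}(x_{i-1},x_i) < lim d_n(x,y) + ε and |x_i| < max{|x_{i-1}|, |x_{i+1}|} for all 0 < i < m; consequently there exists 0 ≤ s < m (or s = m = 0 if x = y gives a trivial chain) such that |x_0| > |x_1| > ⋯ > |x_s| ≤ |x_{s+1}| < ⋯ < |x_m|. -/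
open Set Filter

universe u

/-- The height `|x| = min {n : x ∈ S n}` of a point with respect to an increasing
sequence of sets. -/
noncomputable def heightS {X : Type u} (S : ℕ → Set X) (x : X) : ℕ := sInf {n | x ∈ S n}

lemma mem_heightS {X : Type u} {S : ℕ → Set X} (hu : ∀ x : X, ∃ n, x ∈ S n) (x : X) :
    x ∈ S (heightS S x) := by
  rcases hu x with ⟨n, hn⟩
  exact Nat.sInf_mem ⟨n, show n ∈ {m | x ∈ S m} from hn⟩

/-- Given pseudometrics `d n` on the stages `S n`, the distance `d_{|x,y|}(x,y)` where
`|x,y| = max (|x|, |y|)`. -/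
noncomputable def chainDS {X : Type u} (S : ℕ → Set X) (hmono : Monotone S)
    (hu : ∀ x : X, ∃ n, x ∈ S n) (d : (n : ℕ) → S n → S n → ℝ) (x y : X) : ℝ :=
  d (max (heightS S x) (heightS S y))
    ⟨x, hmono (le_max_left _ _) (mem_heightS hu x)⟩
    ⟨y, hmono (le_max_right _ _) (mem_heightS hu y)⟩

/-- The limit pseudometric
`lim d_n (x,y) = inf { Σ_{i=1}^m d_{|x_{i-1},x_i|}(x_{i-1},x_i) : x = x_0, x_1, …, x_m = y }`. -/
noncomputable def limDS {X : Type u} (S : ℕ → Set X) (hmono : Monotone S)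
    (hu : ∀ x : X, ∃ n, x ∈ S n) (d : (n : ℕ) → S n → S n → ℝ) (x y : X) : ℝ :=
  sInf {r : ℝ | ∃ (m : ℕ) (c : ℕ → X), c 0 = x ∧ c m = y ∧
    r = ∑ i ∈ Finset.range m, chainDS S hmono hu d (c i) (c (i + 1))}

section Aux

variable {X : Type u} {S : ℕ → Set X} {hmono : Monotone S}
    {hu : ∀ x : X, ∃ n, x ∈ S n} {d : (n : ℕ) → S n → S n → ℝ}

lemma IsPseudometric.nonneg' {α : Type*} {d : α → α → ℝ} (h : IsPseudometric d) (a b : α) :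
    0 ≤ d a b := by
  have h1 := h.1 a
  have h2 := h.2.1 a b
  have h3 := h.2.2 a b a
  linarith

lemma chainDS_nonneg (hpseudo : ∀ n, IsPseudometric (d n)) (x y : X) :
    0 ≤ chainDS S hmono hu d x y :=
  (hpseudo _).nonneg' _ _

lemma chainDS_self (hpseudo : ∀ n, IsPseudometric (d n)) (y : X) :
    chainDS S hmono hu d y y = 0 :=
  (hpseudo _).1 _

lemma d_mono (hmonoD : ∀ n (x y : S n),
      d n x y ≤ d (n + 1) (Set.inclusion (hmono (Nat.le_succ n)) x)
        (Set.inclusion (hmono (Nat.le_succ n)) y))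
    {n n' : ℕ} (hle : n ≤ n') (x y : X) (hx : x ∈ S n) (hy : y ∈ S n) :
    d n ⟨x, hx⟩ ⟨y, hy⟩ ≤ d n' ⟨x, hmono hle hx⟩ ⟨y, hmono hle hy⟩ := by
  induction n', hle using Nat.le_induction with
  | base => exact le_refl _
  | succ k hk ih => exact ih.trans (hmonoD k ⟨x, hmono hk hx⟩ ⟨y, hmono hk hy⟩)

lemma d_index_congr {k k' : ℕ} (e : k = k') (x y : X) (hx : x ∈ S k) (hy : y ∈ S k) :
    d k ⟨x, hx⟩ ⟨y, hy⟩ = d k' ⟨x, e ▸ hx⟩ ⟨y, e ▸ hy⟩ := by subst e; rfl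

lemma chainDS_le (hmonoD : ∀ n (x y : S n),
      d n x y ≤ d (n + 1) (Set.inclusion (hmono (Nat.le_succ n)) x)
        (Set.inclusion (hmono (Nat.le_succ n)) y))
    {x y : X} {k : ℕ} (hx : heightS S x ≤ k) (hy : heightS S y ≤ k) :
    chainDS S hmono hu d x y ≤
      d k ⟨x, hmono hx (mem_heightS hu x)⟩ ⟨y, hmono hy (mem_heightS hu y)⟩ :=
  d_mono hmonoD (max_le hx hy) x y _ _

lemma chainDS_tri (hpseudo : ∀ n, IsPseudometric (d n))
    (hmonoD : ∀ n (x y : S n),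
      d n x y ≤ d (n + 1) (Set.inclusion (hmono (Nat.le_succ n)) x)
        (Set.inclusion (hmono (Nat.le_succ n)) y))
    (x y z : X) (hmid : max (heightS S x) (heightS S z) ≤ heightS S y) :
    chainDS S hmono hu d x z ≤ chainDS S hmono hu d x y + chainDS S hmono hu d y z := by
  have hx : heightS S x ≤ heightS S y := le_trans (le_max_left _ _) hmid
  have hz : heightS S z ≤ heightS S y := le_trans (le_max_right _ _) hmid
  have e1 : max (heightS S x) (heightS S y) = heightS S y := max_eq_right hx
  have e2 : max (heightS S y) (heightS S z) = heightS S y := max_eq_left hz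
  have exy : chainDS S hmono hu d x y =
      d (heightS S y) ⟨x, hmono hx (mem_heightS hu x)⟩ ⟨y, mem_heightS hu y⟩ :=
    d_index_congr e1 x y _ _
  have eyz : chainDS S hmono hu d y z =
      d (heightS S y) ⟨y, mem_heightS hu y⟩ ⟨z, hmono hz (mem_heightS hu z)⟩ :=
    d_index_congr e2 y z _ _
  have t := (hpseudo (heightS S y)).2.2 ⟨x, hmono hx (mem_heightS hu x)⟩
    ⟨y, mem_heightS hu y⟩ ⟨z, hmono hz (mem_heightS hu z)⟩
  calc chainDS S hmono hu d x z ≤ _ := chainDS_le hmonoD hx hz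
    _ ≤ _ := t
    _ = _ := by rw [← exy, ← eyz]



lemma chainDS_congr (c : ℕ → X) {i i' j j' : ℕ} (hi : i = i') (hj : j = j') :
    chainDS S hmono hu d (c i) (c j) = chainDS S hmono hu d (c i') (c j') := by rw [hi, hj]

lemma improve (hpseudo : ∀ n, IsPseudometric (d n))
    (hmonoD : ∀ n (x y : S n),
      d n x y ≤ d (n + 1) (Set.inclusion (hmono (Nat.le_succ n)) x)
        (Set.inclusion (hmono (Nat.le_succ n)) y)) :
    ∀ (m : ℕ) (c : ℕ → X), ∃ (m' : ℕ) (c' : ℕ → X),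
    c' 0 = c 0 ∧ c' m' = c m ∧
    (∑ i ∈ Finset.range m', chainDS S hmono hu d (c' i) (c' (i + 1))) ≤
      ∑ i ∈ Finset.range m, chainDS S hmono hu d (c i) (c (i + 1)) ∧
    ∀ i, 0 < i → i < m' →
      heightS S (c' i) < max (heightS S (c' (i - 1))) (heightS S (c' (i + 1))) := by
  intro m
  induction m using Nat.strong_induction_on with
  | _ m ih =>
    intro c
    by_cases hall : ∀ i, 0 < i → i < m →
        heightS S (c i) < max (heightS S (c (i - 1))) (heightS S (c (i + 1)))
    · exact ⟨m, c, rfl, rfl, le_refl _, hall⟩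
    · push_neg at hall
      obtain ⟨i, hi0, him, hge⟩ := hall
      obtain ⟨k, rfl⟩ : ∃ k, i = k + 1 := ⟨i - 1, by omega⟩
      obtain ⟨l, rfl⟩ : ∃ l, m = k + 1 + l + 1 := ⟨m - (k + 2), by omega⟩
      have hge' : max (heightS S (c k)) (heightS S (c (k + 2))) ≤ heightS S (c (k + 1)) := by
        exact hge
      set c₁ : ℕ → X := fun j => if j ≤ k then c j else c (j + 1) with hc₁
      have key : ∑ j ∈ Finset.range (k + 1 + l), chainDS S hmono hu d (c₁ j) (c₁ (j + 1)) ≤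
          ∑ j ∈ Finset.range (k + 1 + l + 1), chainDS S hmono hu d (c j) (c (j + 1)) := by
        have L1 : ∑ j ∈ Finset.range (k + 1 + l), chainDS S hmono hu d (c₁ j) (c₁ (j + 1)) =
            (∑ j ∈ Finset.range k, chainDS S hmono hu d (c₁ j) (c₁ (j + 1))) +
              ∑ j ∈ Finset.range (1 + l), chainDS S hmono hu d (c₁ (k + j)) (c₁ (k + j + 1)) := by
          rw [show k + 1 + l = k + (1 + l) by omega, Finset.sum_range_add]
        have L2 : ∑ j ∈ Finset.range (1 + l), chainDS S hmono hu d (c₁ (k + j)) (c₁ (k + j + 1)) =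
            chainDS S hmono hu d (c₁ k) (c₁ (k + 1)) +
              ∑ j ∈ Finset.range l, chainDS S hmono hu d (c₁ (k + 1 + j)) (c₁ (k + 1 + j + 1)) := by
          rw [Finset.sum_range_add]
          simp only [Finset.sum_range_one, Nat.add_zero,
            show ∀ j : ℕ, k + (1 + j) = k + 1 + j from fun j => by omega]
        have R1 : ∑ j ∈ Finset.range (k + 1 + l + 1), chainDS S hmono hu d (c j) (c (j + 1)) =
            (∑ j ∈ Finset.range k, chainDS S hmono hu d (c j) (c (j + 1))) +
              (chainDS S hmono hu d (c k) (c (k + 1)) +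
                (chainDS S hmono hu d (c (k + 1)) (c (k + 2)) +
                  ∑ j ∈ Finset.range l, chainDS S hmono hu d (c (k + 2 + j)) (c (k + 2 + j + 1)))) := by
          rw [show k + 1 + l + 1 = k + (1 + (1 + l)) by omega, Finset.sum_range_add,
            Finset.sum_range_add, Finset.sum_range_add]
          simp only [Finset.sum_range_one, Nat.add_zero,
            show ∀ j : ℕ, k + (1 + (1 + j)) = k + 2 + j from fun j => by omega,
            show k + (1 + 0) = k + 1 from by omega,
            show k + 1 + 1 = k + 2 from by omega]
        have e0 : ∀ j < k, c₁ j = c j ∧ c₁ (j + 1) = c (j + 1) := by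
          intro j hj
          constructor <;> simp [hc₁] <;> omega
        have eb : ∑ j ∈ Finset.range k, chainDS S hmono hu d (c₁ j) (c₁ (j + 1)) =
            ∑ j ∈ Finset.range k, chainDS S hmono hu d (c j) (c (j + 1)) := by
          apply Finset.sum_congr rfl
          intro j hj
          obtain ⟨e1, e2⟩ := e0 j (Finset.mem_range.mp hj)
          rw [e1, e2]
        have emid : chainDS S hmono hu d (c₁ k) (c₁ (k + 1)) =
            chainDS S hmono hu d (c k) (c (k + 2)) := by
          have e1 : c₁ k = c k := by simp [hc₁]
          have e2 : c₁ (k + 1) = c (k + 2) := by simp [hc₁]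
          rw [e1, e2]
        have etail : ∑ j ∈ Finset.range l, chainDS S hmono hu d (c₁ (k + 1 + j)) (c₁ (k + 1 + j + 1)) =
            ∑ j ∈ Finset.range l, chainDS S hmono hu d (c (k + 2 + j)) (c (k + 2 + j + 1)) := by
          apply Finset.sum_congr rfl
          intro j _
          have e1 : c₁ (k + 1 + j) = c (k + 2 + j) := by
            simp only [hc₁]
            rw [if_neg (by omega)]
            congr 1
            omega
          have e2 : c₁ (k + 1 + j + 1) = c (k + 2 + j + 1) := by
            simp only [hc₁]
            rw [if_neg (by omega)]
            congr 1
            omega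
          rw [e1, e2]
        have tri := chainDS_tri (hu := hu) hpseudo hmonoD (c k) (c (k + 1)) (c (k + 2)) hge'
        rw [L1, L2, R1, eb, emid, etail]
        linarith
      obtain ⟨m', c', h0, hm, hsum, hloc⟩ := ih (k + 1 + l) (by omega) c₁
      refine ⟨m', c', ?_, ?_, hsum.trans key, hloc⟩
      · rw [h0]; simp [hc₁]
      · rw [hm]
        simp only [hc₁]
        rw [if_neg (by omega)]


lemma valley (m : ℕ) (c : ℕ → X)
    (hloc : ∀ i, 0 < i → i < m →
      heightS S (c i) < max (heightS S (c (i - 1))) (heightS S (c (i + 1))))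
    (hex : ∃ i, i < m ∧ heightS S (c i) ≤ heightS S (c (i + 1))) :
    ∃ s, s < m ∧ (∀ i, i < s → heightS S (c (i + 1)) < heightS S (c i)) ∧
      (heightS S (c s) ≤ heightS S (c (s + 1))) ∧
      (∀ i, s + 1 ≤ i → i < m → heightS S (c i) < heightS S (c (i + 1))) := by
  classical
  have hP : ∃ i, i < m ∧ heightS S (c i) ≤ heightS S (c (i + 1)) := hex
  set s := Nat.find hP with hsdef
  have hs := Nat.find_spec hP
  refine ⟨s, hs.1, ?_, hs.2, ?_⟩
  · intro i hi
    have hmin := Nat.find_min hP hi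
    have him : i < m := lt_trans hi hs.1
    push_neg at hmin
    exact hmin him
  · have aux : ∀ j, s + j < m →
        heightS S (c (s + j)) ≤ heightS S (c (s + j + 1)) ∧
          (0 < j → heightS S (c (s + j)) < heightS S (c (s + j + 1))) := by
      intro j
      induction j with
      | zero => exact fun _ => ⟨hs.2, fun h => absurd h (lt_irrefl 0)⟩
      | succ j ihj =>
        intro hlt
        have hj : s + j < m := by omega
        have h1 := (ihj hj).1
        have h2 := hloc (s + j + 1) (by omega) hlt
        have h2' : heightS S (c (s + j + 1)) <
            max (heightS S (c (s + j))) (heightS S (c (s + j + 1 + 1))) := by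
          have e : s + j + 1 - 1 = s + j := by omega
          rw [e] at h2
          exact h2
        have hstep : heightS S (c (s + j + 1)) < heightS S (c (s + j + 1 + 1)) :=
          (lt_max_iff.mp h2').resolve_left (not_lt.mpr h1)
        exact ⟨hstep.le, fun _ => hstep⟩
    intro i h1i him
    obtain ⟨j, rfl⟩ : ∃ j, i = s + j := ⟨i - s, by omega⟩
    exact (aux j him).2 (by omega)

end Aux

/-- Let `(X_n)` be an increasing sequence of sets with union `X` and `(d_n)` a monotone
sequence of pseudometrics (`d_n` a pseudometric on `X_n`).  For any `x, y ∈ X` and `ε > 0`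
there is a chain `x = x_0, x_1, …, x_m = y` with
`Σ_{i=1}^m d_{|x_{i-1},x_i|}(x_{i-1},x_i) < lim d_n (x,y) + ε` and
`|x_i| < max (|x_{i-1}|, |x_{i+1}|)` for all `0 < i < m`; consequently there is `s` with
`s < m` (or `s = m = 0` for a trivial chain) such that
`|x_0| > |x_1| > ⋯ > |x_s| ≤ |x_{s+1}| < ⋯ < |x_m|`. -/
theorem statement6 {X : Type u} (S : ℕ → Set X) (hmono : Monotone S)
    (hu : ∀ x : X, ∃ n, x ∈ S n)
    (d : (n : ℕ) → S n → S n → ℝ)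
    (hpseudo : ∀ n, IsPseudometric (d n))
    (hmonoD : ∀ n (x y : S n),
      d n x y ≤ d (n + 1) (Set.inclusion (hmono (Nat.le_succ n)) x)
        (Set.inclusion (hmono (Nat.le_succ n)) y))
    (x y : X) (ε : ℝ) (hε : 0 < ε) :
    ∃ (m : ℕ) (c : ℕ → X), c 0 = x ∧ c m = y ∧
      (∑ i ∈ Finset.range m, chainDS S hmono hu d (c i) (c (i + 1))
          < limDS S hmono hu d x y + ε) ∧
      (∀ i, 0 < i → i < m →
        heightS S (c i) < max (heightS S (c (i - 1))) (heightS S (c (i + 1)))) ∧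
      ∃ s : ℕ, (s < m ∨ (s = 0 ∧ m = 0)) ∧
        (∀ i, i < s → heightS S (c (i + 1)) < heightS S (c i)) ∧
        (s < m → heightS S (c s) ≤ heightS S (c (s + 1))) ∧
        (∀ i, s + 1 ≤ i → i < m → heightS S (c i) < heightS S (c (i + 1))) := by
  classical
  set A : Set ℝ := {r : ℝ | ∃ (m : ℕ) (c : ℕ → X), c 0 = x ∧ c m = y ∧
    r = ∑ i ∈ Finset.range m, chainDS S hmono hu d (c i) (c (i + 1))} with hA
  have hne : A.Nonempty := by
    refine ⟨chainDS S hmono hu d x y, 1, fun j => if j = 0 then x else y, by simp, by simp, ?_⟩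
    simp [Finset.sum_range_one]
  have hbdd : BddBelow A := by
    refine ⟨0, ?_⟩
    rintro r ⟨m, c, -, -, rfl⟩
    exact Finset.sum_nonneg fun i _ => chainDS_nonneg hpseudo _ _
  have hlim : limDS S hmono hu d x y = sInf A := rfl
  have hlt : sInf A < sInf A + ε := by linarith
  obtain ⟨r, hrA, hr⟩ := (csInf_lt_iff hbdd hne).mp hlt
  obtain ⟨m, c, hc0, hcm, rfl⟩ := hrA
  obtain ⟨m₁, c₁, h0, hm, hsum, hloc⟩ := improve hpseudo hmonoD m c
  have h0x : c₁ 0 = x := h0.trans hc0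
  have hmy : c₁ m₁ = y := hm.trans hcm
  have hsum1 : ∑ i ∈ Finset.range m₁, chainDS S hmono hu d (c₁ i) (c₁ (i + 1)) <
      limDS S hmono hu d x y + ε := by
    rw [hlim]
    exact lt_of_le_of_lt hsum hr
  rcases Nat.eq_zero_or_pos m₁ with hm0 | hm1
  · subst hm0
    refine ⟨0, c₁, h0x, hmy, hsum1, by omega, 0, Or.inr ⟨rfl, rfl⟩, by omega, by omega, by omega⟩
  by_cases hdec : ∀ i, i < m₁ → heightS S (c₁ (i + 1)) < heightS S (c₁ i)
  · -- extend the chain by repeating the last point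
    set c₂ : ℕ → X := fun j => c₁ (min j m₁) with hc₂
    have hc₂eq : ∀ j, j ≤ m₁ → c₂ j = c₁ j := by
      intro j hj
      simp [hc₂, min_eq_left hj]
    have h20 : c₂ 0 = x := by rw [hc₂eq 0 (by omega)]; exact h0x
    have h2m : c₂ (m₁ + 1) = y := by
      simp only [hc₂]
      rw [min_eq_right (by omega)]
      exact hmy
    have hsum2 : ∑ i ∈ Finset.range (m₁ + 1), chainDS S hmono hu d (c₂ i) (c₂ (i + 1)) =
        ∑ i ∈ Finset.range m₁, chainDS S hmono hu d (c₁ i) (c₁ (i + 1)) := by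
      rw [Finset.sum_range_succ]
      have e1 : ∀ i ∈ Finset.range m₁,
          chainDS S hmono hu d (c₂ i) (c₂ (i + 1)) =
            chainDS S hmono hu d (c₁ i) (c₁ (i + 1)) := by
        intro i hi
        have hi' := Finset.mem_range.mp hi
        rw [hc₂eq i (by omega), hc₂eq (i + 1) (by omega)]
      rw [Finset.sum_congr rfl e1]
      have e2 : c₂ m₁ = c₁ m₁ := hc₂eq m₁ le_rfl
      have e3 : c₂ (m₁ + 1) = c₁ m₁ := by
        simp only [hc₂]; rw [min_eq_right (by omega)]
      rw [e2, e3, chainDS_self hpseudo]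
      ring
    have hloc2 : ∀ i, 0 < i → i < m₁ + 1 →
        heightS S (c₂ i) < max (heightS S (c₂ (i - 1))) (heightS S (c₂ (i + 1))) := by
      intro i hi0 hi1
      have hi' : i ≤ m₁ := by omega
      have hd := hdec (i - 1) (by omega)
      have e : i - 1 + 1 = i := by omega
      rw [e] at hd
      have e1 : c₂ i = c₁ i := hc₂eq i hi'
      have e2 : c₂ (i - 1) = c₁ (i - 1) := hc₂eq (i - 1) (by omega)
      rw [e1, e2]
      exact lt_max_iff.mpr (Or.inl hd)
    have hex2 : ∃ i, i < m₁ + 1 ∧ heightS S (c₂ i) ≤ heightS S (c₂ (i + 1)) := by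
      refine ⟨m₁, by omega, ?_⟩
      have e2 : c₂ m₁ = c₁ m₁ := hc₂eq m₁ le_rfl
      have e3 : c₂ (m₁ + 1) = c₁ m₁ := by
        simp only [hc₂]; rw [min_eq_right (by omega)]
      rw [e2, e3]
    obtain ⟨s, hs1, hs2, hs3, hs4⟩ := valley (m₁ + 1) c₂ hloc2 hex2
    exact ⟨m₁ + 1, c₂, h20, h2m, by rw [hsum2]; exact hsum1, hloc2,
      s, Or.inl hs1, hs2, fun _ => hs3, hs4⟩
  · push_neg at hdec
    obtain ⟨i0, hi0m, hi0⟩ := hdec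
    obtain ⟨s, hs1, hs2, hs3, hs4⟩ := valley m₁ c₁ hloc ⟨i0, hi0m, hi0⟩
    exact ⟨m₁, c₁, h0x, hmy, hsum1, hloc, s, Or.inl hs1, hs2, fun _ => hs3, hs4⟩
end
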